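/- arXiv:2103.01460 — 3 statements merged into one kernel-verified Lean document; each statement's English description precedes it below -/
import Mathlib

section
/- (Lemma 1, monotonicity of follower utility in leader's trust.) Fix δ2 ≥ 0 and let r : S1 → S2 be the follower's limited-trust best response map (which does not depend on δ1). For δ1 ≥ 0, let s*(δ1) be the leader's limited-trust optimal strategy: a maximizer of u1(s,r(s))+u2(s,r(s)) over {s ∈ S1 : u1(g,r(g)) − u1(s,r(s)) ≤ δ1}, where g ∈ argmax_s u1(s,r(s)) is the leader's greedy strategy. Assume at each trust level the leader breaks ties by choosing, among optimal strategies, one maximizing its own utility u1(s,r(s)). Then the follower's realized utility u2(s*(δ1), r(s*(δ1))) is monotone nondecreasing in δ1. -/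
/-!
Raising the trust level only enlarges the feasible set, so the new optimum `s'` has net utility
at least that of the old optimum `s`. If `s'` also gives the leader no more than `s`, the extra
net utility must go to the follower. Otherwise `s'` gives the leader strictly more than `s`, so it
was already feasible at the lower trust level; there it ties `s` in net utility, and the
tie-breaking rule would have preferred `s'`, a contradiction.
-/

section LimitedTrust

variable {α β : Type*} [AddCommGroup β] [LinearOrder β]
  {c δ δ' : β} {f h : α → β} {s s' : α}

theorem le_of_tie_break_of_net_le
    (hs_max : ∀ t, c - f t ≤ δ → f t + h t ≤ f s + h s)
    (hs_tie : ∀ t, c - f t ≤ δ → f t + h t = f s + h s → f t ≤ f s)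
    {t : α} (ht : c - f t ≤ δ) (hnet : f s + h s ≤ f t + h t) :
    f t ≤ f s :=
  hs_tie t ht (le_antisymm (hs_max t ht) hnet)

theorem follower_utility_le_of_trust_le [IsOrderedAddMonoid β]
    (hδ : δ ≤ δ') (hs_feas : c - f s ≤ δ)
    (hs_max : ∀ t, c - f t ≤ δ → f t + h t ≤ f s + h s)
    (hs_tie : ∀ t, c - f t ≤ δ → f t + h t = f s + h s → f t ≤ f s)
    (hs'_max : ∀ t, c - f t ≤ δ' → f t + h t ≤ f s' + h s') :
    h s ≤ h s' := by
  have hnet : f s + h s ≤ f s' + h s' := hs'_max s (hs_feas.trans hδ)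
  by_cases hle : f s' ≤ f s
  · exact le_of_add_le_add_left (hnet.trans (add_le_add_left hle _))
  · have hs'_feas : c - f s' ≤ δ := (sub_le_sub_left (not_le.1 hle).le c).trans hs_feas
    exact absurd (le_of_tie_break_of_net_le hs_max hs_tie hs'_feas hnet) hle

end LimitedTrust

theorem follower_utility_monotone_in_leader_trust_general
    {S1 S2 : Type*}
    (u1 u2 : S1 → S2 → ℝ) (r : S1 → S2)
    (g : S1)
    (δ1 δ1' : ℝ) (hδ : δ1 ≤ δ1')
    (s s' : S1)
    -- s is the leader's limited-trust optimal strategy at trust level δ1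
    (hs_feas : u1 g (r g) - u1 s (r s) ≤ δ1)
    (hs_max : ∀ t : S1, u1 g (r g) - u1 t (r t) ≤ δ1 →
      u1 t (r t) + u2 t (r t) ≤ u1 s (r s) + u2 s (r s))
    (hs_tie : ∀ t : S1, u1 g (r g) - u1 t (r t) ≤ δ1 →
      u1 t (r t) + u2 t (r t) = u1 s (r s) + u2 s (r s) →
      u1 t (r t) ≤ u1 s (r s))
    -- s' is the leader's limited-trust optimal strategy at trust level δ1'
    (hs'_max : ∀ t : S1, u1 g (r g) - u1 t (r t) ≤ δ1' →
      u1 t (r t) + u2 t (r t) ≤ u1 s' (r s') + u2 s' (r s')) :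
    u2 s (r s) ≤ u2 s' (r s') :=
  follower_utility_le_of_trust_le (f := fun t => u1 t (r t)) (h := fun t => u2 t (r t))
    hδ hs_feas hs_max hs_tie hs'_max

/-- Lemma 1: with the follower's response map `r` fixed, and the
leader choosing a net-utility maximizer over the feasible set
`L(δ1) = {s : u1(g,r g) − u1(s,r s) ≤ δ1}` with ties broken in favor of its own
utility, the follower's realized utility is monotone nondecreasing in `δ1`. -/
theorem follower_utility_monotone_in_leader_trust
    {S1 S2 : Type*} [Fintype S1] [Fintype S2] [Nonempty S1] [Nonempty S2]
    (u1 u2 : S1 → S2 → ℝ) (r : S1 → S2)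
    (g : S1) (hg : ∀ s : S1, u1 s (r s) ≤ u1 g (r g))
    (δ1 δ1' : ℝ) (hδ1 : 0 ≤ δ1) (hδ : δ1 ≤ δ1')
    (s s' : S1)
    -- s is the leader's limited-trust optimal strategy at trust level δ1
    (hs_feas : u1 g (r g) - u1 s (r s) ≤ δ1)
    (hs_max : ∀ t : S1, u1 g (r g) - u1 t (r t) ≤ δ1 →
      u1 t (r t) + u2 t (r t) ≤ u1 s (r s) + u2 s (r s))
    (hs_tie : ∀ t : S1, u1 g (r g) - u1 t (r t) ≤ δ1 →
      u1 t (r t) + u2 t (r t) = u1 s (r s) + u2 s (r s) →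
      u1 t (r t) ≤ u1 s (r s))
    -- s' is the leader's limited-trust optimal strategy at trust level δ1'
    (hs'_feas : u1 g (r g) - u1 s' (r s') ≤ δ1')
    (hs'_max : ∀ t : S1, u1 g (r g) - u1 t (r t) ≤ δ1' →
      u1 t (r t) + u2 t (r t) ≤ u1 s' (r s') + u2 s' (r s'))
    (hs'_tie : ∀ t : S1, u1 g (r g) - u1 t (r t) ≤ δ1' →
      u1 t (r t) + u2 t (r t) = u1 s' (r s') + u2 s' (r s') →
      u1 t (r t) ≤ u1 s' (r s')) :
    u2 s (r s) ≤ u2 s' (r s') :=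
  follower_utility_monotone_in_leader_trust_general u1 u2 r g δ1 δ1' hδ s s' hs_feas hs_max hs_tie
    hs'_max
end

section
/- (Corollary to Lemma 1.) Under the same setup and tie-breaking rule, the leader's realized utility u1(s*(δ1), r(s*(δ1))) is monotone nonincreasing in δ1, and the net utility u1(s*(δ1),r(s*(δ1))) + u2(s*(δ1),r(s*(δ1))) is monotone nondecreasing in δ1. -/
/-! A larger trust budget `δ1` only enlarges the feasible set `L(δ1)`, so the optimal net utility
can only grow. If the new optimum `s'` is still feasible for `δ1`, it ties with `s` in net utility
and the tie-break gives `u1 s' ≤ u1 s`; otherwise `s'` lies below the threshold that `s` clears. -/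

theorem le_of_le_of_isMax_superlevel_tieBreak {α : Type*} {f w : α → ℝ} {c : ℝ} {s s' : α}
    (hs : c ≤ f s) (hs_max : ∀ t, c ≤ f t → w t ≤ w s)
    (hs_tie : ∀ t, c ≤ f t → w t = w s → f t ≤ f s) (hw : w s ≤ w s') :
    f s' ≤ f s := by
  by_cases hs' : c ≤ f s'
  · exact hs_tie s' hs' (le_antisymm (hs_max s' hs') hw)
  · exact (lt_of_not_ge hs').le.trans hs

theorem leader_utility_antitone_net_monotone_in_leader_trust_general
    {S1 S2 : Type*}
    (u1 u2 : S1 → S2 → ℝ) (r : S1 → S2)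
    (g : S1)
    (δ1 δ1' : ℝ) (hδ : δ1 ≤ δ1')
    (s s' : S1)
    (hs_feas : u1 g (r g) - u1 s (r s) ≤ δ1)
    (hs_max : ∀ t : S1, u1 g (r g) - u1 t (r t) ≤ δ1 →
      u1 t (r t) + u2 t (r t) ≤ u1 s (r s) + u2 s (r s))
    (hs_tie : ∀ t : S1, u1 g (r g) - u1 t (r t) ≤ δ1 →
      u1 t (r t) + u2 t (r t) = u1 s (r s) + u2 s (r s) →
      u1 t (r t) ≤ u1 s (r s))
    (hs'_max : ∀ t : S1, u1 g (r g) - u1 t (r t) ≤ δ1' →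
      u1 t (r t) + u2 t (r t) ≤ u1 s' (r s') + u2 s' (r s')) :
    u1 s' (r s') ≤ u1 s (r s) ∧
      u1 s (r s) + u2 s (r s) ≤ u1 s' (r s') + u2 s' (r s') := by
  have hnet : u1 s (r s) + u2 s (r s) ≤ u1 s' (r s') + u2 s' (r s') :=
    hs'_max s (hs_feas.trans hδ)
  refine ⟨?_, hnet⟩
  exact le_of_le_of_isMax_superlevel_tieBreak (f := fun t => u1 t (r t))
    (w := fun t => u1 t (r t) + u2 t (r t)) (sub_le_comm.mp hs_feas)
    (fun t ht => hs_max t (sub_le_comm.mp ht)) (fun t ht => hs_tie t (sub_le_comm.mp ht)) hnet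

/-- Corollary to Lemma 1: under the same setup and tie-breaking
rule, the leader's realized utility is monotone nonincreasing in `δ1`, and the
net utility is monotone nondecreasing in `δ1`. -/
theorem leader_utility_antitone_net_monotone_in_leader_trust
    {S1 S2 : Type*} [Fintype S1] [Fintype S2] [Nonempty S1] [Nonempty S2]
    (u1 u2 : S1 → S2 → ℝ) (r : S1 → S2)
    (g : S1) (hg : ∀ s : S1, u1 s (r s) ≤ u1 g (r g))
    (δ1 δ1' : ℝ) (hδ1 : 0 ≤ δ1) (hδ : δ1 ≤ δ1')
    (s s' : S1)
    (hs_feas : u1 g (r g) - u1 s (r s) ≤ δ1)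
    (hs_max : ∀ t : S1, u1 g (r g) - u1 t (r t) ≤ δ1 →
      u1 t (r t) + u2 t (r t) ≤ u1 s (r s) + u2 s (r s))
    (hs_tie : ∀ t : S1, u1 g (r g) - u1 t (r t) ≤ δ1 →
      u1 t (r t) + u2 t (r t) = u1 s (r s) + u2 s (r s) →
      u1 t (r t) ≤ u1 s (r s))
    (hs'_feas : u1 g (r g) - u1 s' (r s') ≤ δ1')
    (hs'_max : ∀ t : S1, u1 g (r g) - u1 t (r t) ≤ δ1' →
      u1 t (r t) + u2 t (r t) ≤ u1 s' (r s') + u2 s' (r s'))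
    (hs'_tie : ∀ t : S1, u1 g (r g) - u1 t (r t) ≤ δ1' →
      u1 t (r t) + u2 t (r t) = u1 s' (r s') + u2 s' (r s') →
      u1 t (r t) ≤ u1 s' (r s')) :
    u1 s' (r s') ≤ u1 s (r s) ∧
      u1 s (r s) + u2 s (r s) ≤ u1 s' (r s') + u2 s' (r s') :=
  leader_utility_antitone_net_monotone_in_leader_trust_general u1 u2 r g δ1 δ1' hδ s s' hs_feas
    hs_max hs_tie hs'_max
end

section
/- (Identification of the follower's trust level from its response.) Consider a 1×n game where the follower's strategies s_1,…,s_k lie on the Pareto frontier in (u2, u1+u2) coordinates, labeled so that b_1 > b_2 > … > b_k and c_1 < c_2 < … < c_k, where b_j = u2(s_j) and c_j = u1(s_j)+u2(s_j), and every non-frontier strategy is dominated by some frontier strategy. Then for δ2 ≥ 0, the follower's limited-trust best response equals s_j if and only if b_1 − b_j ≤ δ2 < b_1 − b_{j+1}, with the convention b_{k+1} = −∞. -/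
/-! Net utility increases strictly along the frontier, so `s j` can only be the best response if no
later frontier strategy is feasible. Conversely, if none is, every feasible strategy is weakly
dominated by a frontier strategy `s i`, which is then feasible too, so `i ≤ j`: the strategy can
neither beat `s j` in net utility nor tie with it unless `i = j`, where `u2` settles the tie. -/

section

variable {S ι : Type*}

/-- The limited-trust best response for trust level `δ`, greedy value `b₀`, follower utility `b` and
net utility `c`. -/
def IsTrustBestResponse (b c : S → ℝ) (b₀ δ : ℝ) (x : S) : Prop :=
  b₀ - b x ≤ δ ∧ (∀ t, b₀ - b t ≤ δ → c t ≤ c x) ∧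
    (∀ t, b₀ - b t ≤ δ → c t = c x → b t ≤ b x)

theorem exists_frontier_weaklyDominates {b c : S → ℝ} {s : ι → S}
    (hdom : ∀ t, (∀ i, t ≠ s i) → ∃ i, b t ≤ b (s i) ∧ c t ≤ c (s i) ∧
      (b t < b (s i) ∨ c t < c (s i))) (t : S) :
    ∃ i, b t ≤ b (s i) ∧ c t ≤ c (s i) := by
  by_cases hfr : ∀ i, t ≠ s i
  · obtain ⟨i, hb, hc, -⟩ := hdom t hfr
    exact ⟨i, hb, hc⟩
  · obtain ⟨i, rfl⟩ : ∃ i, t = s i := by simpa using hfr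
    exact ⟨i, le_rfl, le_rfl⟩

variable [LinearOrder ι]

theorem IsTrustBestResponse.infeasible_of_lt {b c : S → ℝ} {s : ι → S} {b₀ δ : ℝ} {j : ι}
    (hc : StrictMono fun i => c (s i)) (h : IsTrustBestResponse b c b₀ δ (s j)) {j' : ι}
    (hj : j < j') : δ < b₀ - b (s j') := by
  by_contra! hfeas
  exact (h.2.1 (s j') hfeas).not_gt (hc hj)

theorem isTrustBestResponse_frontier {b c : S → ℝ} {s : ι → S} {b₀ δ : ℝ} {j : ι}
    (hdom : ∀ t, ∃ i, b t ≤ b (s i) ∧ c t ≤ c (s i)) (hc : StrictMono fun i => c (s i))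
    (hfeas : b₀ - b (s j) ≤ δ) (hinfeas : ∀ j', j < j' → δ < b₀ - b (s j')) :
    IsTrustBestResponse b c b₀ δ (s j) := by
  have le_of_feasible : ∀ i, b₀ - b (s i) ≤ δ → i ≤ j := fun i hi =>
    not_lt.mp fun hji => (hinfeas i hji).not_ge hi
  refine ⟨hfeas, fun t ht => ?_, fun t ht hct => ?_⟩
  · obtain ⟨i, hbi, hci⟩ := hdom t
    exact hci.trans (hc.monotone (le_of_feasible i (by linarith)))
  · obtain ⟨i, hbi, hci⟩ := hdom t
    obtain hij | rfl := (le_of_feasible i (by linarith)).lt_or_eq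
    · exact absurd (hci.trans_lt (hc hij)) hct.not_lt
    · exact hbi

end

theorem frontier_characterizes_LTBR_general
    {S : Type*} {k : ℕ} (hk : 0 < k)
    (u1 u2 : S → ℝ) (s : Fin k → S)
    (hc : ∀ i j : Fin k, i < j → u1 (s i) + u2 (s i) < u1 (s j) + u2 (s j))
    (hdom : ∀ t : S, (∀ j : Fin k, t ≠ s j) →
      ∃ j : Fin k, u2 t ≤ u2 (s j) ∧ u1 t + u2 t ≤ u1 (s j) + u2 (s j) ∧
        (u2 t < u2 (s j) ∨ u1 t + u2 t < u1 (s j) + u2 (s j)))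
    (δ2 : ℝ) (j : Fin k) :
    ( -- s j is the limited-trust best response with trust level δ2:
      u2 (s ⟨0, hk⟩) - u2 (s j) ≤ δ2 ∧
      (∀ t : S, u2 (s ⟨0, hk⟩) - u2 t ≤ δ2 →
        u1 t + u2 t ≤ u1 (s j) + u2 (s j)) ∧
      (∀ t : S, u2 (s ⟨0, hk⟩) - u2 t ≤ δ2 →
        u1 t + u2 t = u1 (s j) + u2 (s j) → u2 t ≤ u2 (s j)) )
    ↔ ( u2 (s ⟨0, hk⟩) - u2 (s j) ≤ δ2 ∧
        ∀ j' : Fin k, j < j' → δ2 < u2 (s ⟨0, hk⟩) - u2 (s j') ) := by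
  have hc' : StrictMono fun i => u1 (s i) + u2 (s i) := fun i j h => hc i j h
  change IsTrustBestResponse u2 (fun t => u1 t + u2 t) _ δ2 (s j) ↔ _
  exact ⟨fun h => ⟨h.1, fun _ => h.infeasible_of_lt hc'⟩, fun ⟨hfeas, hinfeas⟩ =>
    isTrustBestResponse_frontier (exists_frontier_weaklyDominates hdom) hc' hfeas hinfeas⟩

/-- identification of the follower's trust level from its
response: in a 1×n game whose Pareto frontier in `(u2, u1+u2)` coordinates is
`s 0, s 1, …, s (k-1)` with `u2` strictly decreasing and net utility strictly
increasing along the frontier (so `b_1 = u2 (s 0)` is the greedy value), and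
every non-frontier strategy dominated by some frontier strategy, the follower's
limited-trust best response (ties broken in favor of higher `u2`) equals `s j`
iff `b_1 − b_j ≤ δ2 < b_1 − b_{j+1}` (the upper constraint being vacuous for
`j = k-1`, i.e. `b_{k+1} = −∞`; since `u2` is strictly decreasing along the
frontier, `δ2 < b_1 − b_{j+1}` is equivalent to `δ2 < b_1 − b_{j'}` for all
`j' > j`). -/
theorem frontier_characterizes_LTBR
    {S : Type*} [Fintype S] {k : ℕ} (hk : 0 < k)
    (u1 u2 : S → ℝ) (s : Fin k → S)
    (hb : ∀ i j : Fin k, i < j → u2 (s j) < u2 (s i))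
    (hc : ∀ i j : Fin k, i < j → u1 (s i) + u2 (s i) < u1 (s j) + u2 (s j))
    (hgreedy : ∀ t : S, u2 t ≤ u2 (s ⟨0, hk⟩))
    (hdom : ∀ t : S, (∀ j : Fin k, t ≠ s j) →
      ∃ j : Fin k, u2 t ≤ u2 (s j) ∧ u1 t + u2 t ≤ u1 (s j) + u2 (s j) ∧
        (u2 t < u2 (s j) ∨ u1 t + u2 t < u1 (s j) + u2 (s j)))
    (δ2 : ℝ) (hδ2 : 0 ≤ δ2) (j : Fin k) :
    ( -- s j is the limited-trust best response with trust level δ2: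
      u2 (s ⟨0, hk⟩) - u2 (s j) ≤ δ2 ∧
      (∀ t : S, u2 (s ⟨0, hk⟩) - u2 t ≤ δ2 →
        u1 t + u2 t ≤ u1 (s j) + u2 (s j)) ∧
      (∀ t : S, u2 (s ⟨0, hk⟩) - u2 t ≤ δ2 →
        u1 t + u2 t = u1 (s j) + u2 (s j) → u2 t ≤ u2 (s j)) )
    ↔ ( u2 (s ⟨0, hk⟩) - u2 (s j) ≤ δ2 ∧
        ∀ j' : Fin k, j < j' → δ2 < u2 (s ⟨0, hk⟩) - u2 (s j') ) :=
  frontier_characterizes_LTBR_general hk u1 u2 s hc hdom δ2 j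
end
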